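/- arXiv:2412.17410 — 4 statements merged into one kernel-verified Lean document; each statement's English description precedes it below -/
import Mathlib

section
/- If A(x) is a smooth matrix-valued field on an open set of ℝⁿ whose entries satisfy the symmetry of mixed partial derivatives in the sense that ∂_l Aⁱⱼ = ∂_j Aⁱₗ for all i, j, l (Codazzi-type condition), then the Newton tensor is divergence-free: Σ_i ∂/∂x_i (σ_k(A))ⁱⱼ = 0 for every j. -/
open Matrix Finset Real MeasureTheory

/-- Partial derivative of `f` in the `i`-th coordinate direction at `x`. -/
noncomputable def pd {n : ℕ} (f : (Fin n → ℝ) → ℝ) (i : Fin n) (x : Fin n → ℝ) : ℝ :=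
  fderiv ℝ f x (Pi.single i 1)

/-- Squared Euclidean norm of the gradient `|Du|²`. -/
noncomputable def gradSq {n : ℕ} (u : (Fin n → ℝ) → ℝ) (x : Fin n → ℝ) : ℝ :=
  ∑ i, (pd u i x) ^ 2

/-- The shape operator `h_i^j = ∂/∂x_i (u_j / √(1 - |Du|²))` of the spacelike graph of `u`. -/
noncomputable def Aop {n : ℕ} (u : (Fin n → ℝ) → ℝ) (x : Fin n → ℝ) :
    Matrix (Fin n) (Fin n) ℝ :=
  Matrix.of fun i j => pd (fun y => pd u j y / Real.sqrt (1 - gradSq u y)) i x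

/-- `σ_k(A)`: the `k`-th elementary symmetric function of the eigenvalues of `A`,
read off from the characteristic polynomial. -/
noncomputable def msigma (n k : ℕ) (A : Matrix (Fin n) (Fin n) ℝ) : ℝ :=
  if k ≤ n then (-1 : ℝ) ^ k * (Matrix.charpoly A).coeff (n - k) else 0

/-- The Newton tensor `(σ_k(A))^i_j = ∂σ_k(A)/∂A^j_i`. -/
noncomputable def newton (n k : ℕ) (A : Matrix (Fin n) (Fin n) ℝ) :
    Matrix (Fin n) (Fin n) ℝ :=
  Matrix.of fun i j =>
    deriv (fun t : ℝ => msigma n k (A + t • Matrix.single j i 1)) 0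

/-- `σ_k(λ)` for `λ ∈ ℝⁿ`. -/
noncomputable def esymm (n k : ℕ) (lam : Fin n → ℝ) : ℝ :=
  ∑ s ∈ Finset.powersetCard k Finset.univ, ∏ i ∈ s, lam i

/-- The Gårding cone `Γ_k`. -/
def GammaK (n k : ℕ) : Set (Fin n → ℝ) :=
  {lam | ∀ i, 1 ≤ i → i ≤ k → 0 < esymm n i lam}

/-- The Minkowski scalar product on `ℝ^{n,1}`. -/
noncomputable def mink (n : ℕ) (Y Z : Fin (n + 1) → ℝ) : ℝ :=
  (∑ i : Fin n, Y i.castSucc * Z i.castSucc) - Y (Fin.last n) * Z (Fin.last n)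

/-- The graph map `X(x) = (x, u(x))`. -/
noncomputable def Xg {n : ℕ} (u : (Fin n → ℝ) → ℝ) (z : Fin n → ℝ) : Fin (n + 1) → ℝ :=
  Fin.snoc z (u z)

/-- The timelike unit normal `N = (Du, 1)/√(1 - |Du|²)` of the graph of `u`. -/
noncomputable def Nvec {n : ℕ} (u : (Fin n → ℝ) → ℝ) (x : Fin n → ℝ) : Fin (n + 1) → ℝ :=
  fun j => (Fin.snoc (fun i => pd u i x) 1 : Fin (n + 1) → ℝ) j / Real.sqrt (1 - gradSq u x)


namespace NewtonAux

open Polynomial Equiv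

variable {n : ℕ}

/-- Permutations fixing the complement of `t` pointwise. -/
def Pset (n : ℕ) (t : Finset (Fin n)) : Finset (Equiv.Perm (Fin n)) :=
  Finset.univ.filter (fun σ => ∀ i ∉ t, σ i = i)

lemma coeff_perm_prod {k : ℕ} (hk : k ≤ n) (A : Matrix (Fin n) (Fin n) ℝ)
    (σ : Equiv.Perm (Fin n)) :
    ((-1:ℝ))^k * (∏ i, Matrix.charmatrix A (σ i) i).coeff (n - k) =
      ∑ s ∈ ((Finset.univ.filter fun i => σ i = i).powerset.filter
          (fun s => s.card + (Finset.univ.filter fun i => ¬ σ i = i).card = k)),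
        ∏ i ∈ s ∪ (Finset.univ.filter fun i => ¬ σ i = i), A (σ i) i := by
  classical
  set F := Finset.univ.filter (fun i => σ i = i) with hF
  set N := Finset.univ.filter (fun i => ¬ σ i = i) with hN
  have hFN : F.card + N.card = n := by
    rw [hF, hN, Finset.card_filter_add_card_filter_not]
    simp
  have hFc : F.card ≤ n := by omega
  have hsplit : (∏ i, Matrix.charmatrix A (σ i) i)
      = (∏ i ∈ F, (Polynomial.X - Polynomial.C (A i i))) *
        Polynomial.C ((-1 : ℝ)^(N.card) * ∏ i ∈ N, A (σ i) i) := by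
    rw [← Finset.prod_filter_mul_prod_filter_not Finset.univ (fun i => σ i = i)]
    congr 1
    · exact Finset.prod_congr rfl fun i hi => by
        rw [show σ i = i from (Finset.mem_filter.1 hi).2, Matrix.charmatrix_apply_eq]
    · have h1 : ∀ i ∈ N, Matrix.charmatrix A (σ i) i = -Polynomial.C (A (σ i) i) := by
        intro i hi
        exact Matrix.charmatrix_apply_ne _ _ _ ((Finset.mem_filter.1 hi).2)
      rw [Finset.prod_congr rfl h1]
      calc ∏ x ∈ N, -Polynomial.C (A (σ x) x)
          = (∏ _x ∈ N, (-1 : ℝ[X])) * ∏ x ∈ N, Polynomial.C (A (σ x) x) := by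
            rw [← Finset.prod_mul_distrib]
            exact Finset.prod_congr rfl fun _ _ => by ring
        _ = Polynomial.C ((-1 : ℝ)^(N.card) * ∏ i ∈ N, A (σ i) i) := by
            rw [Finset.prod_const, ← map_prod]
            simp [_root_.map_mul, map_pow]
  rw [hsplit, Polynomial.coeff_mul_C]
  by_cases hdeg : n - k ≤ F.card
  · -- main case
    have hco : (∏ i ∈ F, (Polynomial.X - Polynomial.C (A i i))).coeff (n - k)
        = (-1 : ℝ)^(F.card - (n - k)) *
          ∑ s ∈ F.powersetCard (F.card - (n - k)), ∏ i ∈ s, A i i := by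
      have hcard : Multiset.card (F.val.map fun i => A i i) = F.card := by
        rw [Multiset.card_map]; rfl
      have h2 := Multiset.prod_X_sub_C_coeff (F.val.map fun i => A i i)
        (k := n - k) (by rw [hcard]; exact hdeg)
      rw [Multiset.map_map] at h2
      rw [hcard] at h2
      rw [Finset.esymm_map_val] at h2
      rw [Finset.prod_eq_multiset_prod]
      exact h2
    have hNc : N.card = n - F.card := by omega
    have hsign : ((-1:ℝ))^k * ((-1 : ℝ)^(F.card - (n-k)) * (-1:ℝ)^(N.card)) = 1 := by
      rw [← pow_add, ← pow_add, show k + ((F.card - (n-k)) + N.card) = 2 * k by omega,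
        pow_mul]
      norm_num
    have hset : (F.powerset.filter (fun s => s.card + N.card = k))
        = F.powersetCard (F.card - (n - k)) := by
      ext s
      simp only [Finset.mem_filter, Finset.mem_powerset, Finset.mem_powersetCard]
      constructor
      · rintro ⟨h1, h2⟩
        exact ⟨h1, by have := Finset.card_le_card h1; omega⟩
      · rintro ⟨h1, h2⟩
        exact ⟨h1, by have := Finset.card_le_card h1; omega⟩
    have step : ∀ s ∈ F.powersetCard (F.card - (n - k)),
        (∏ i ∈ s, A i i) * (∏ i ∈ N, A (σ i) i) = ∏ i ∈ s ∪ N, A (σ i) i := by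
      intro s hs
      have hsF : s ⊆ F := (Finset.mem_powersetCard.1 hs).1
      have hdisj : Disjoint s N := by
        refine Finset.disjoint_left.2 fun a ha haN => ?_
        exact (Finset.mem_filter.1 haN).2 (Finset.mem_filter.1 (hsF ha)).2
      rw [Finset.prod_union hdisj]
      congr 1
      exact Finset.prod_congr rfl fun i hi => by
        rw [show σ i = i from (Finset.mem_filter.1 (hsF hi)).2]
    rw [hco, hset]
    simp only [Finset.mul_sum, Finset.sum_mul]
    refine Finset.sum_congr rfl fun s hs => ?_
    conv_rhs => rw [← step s hs]
    linear_combination ((∏ i ∈ s, A i i) * (∏ i ∈ N, A (σ i) i)) * hsign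
  · -- degree too small: coefficient vanishes
    have hz : (∏ i ∈ F, (Polynomial.X - Polynomial.C (A i i))).coeff (n - k) = 0 := by
      apply Polynomial.coeff_eq_zero_of_natDegree_lt
      rw [Polynomial.natDegree_prod_of_monic _ _
        (fun i _ => Polynomial.monic_X_sub_C (A i i))]
      simp only [Polynomial.natDegree_X_sub_C, Finset.sum_const, smul_eq_mul, mul_one]
      omega
    rw [hz]
    have hempty : (F.powerset.filter (fun s => s.card + N.card = k)) = ∅ := by
      refine Finset.filter_false_of_mem fun s hs => ?_
      have := Finset.card_le_card (Finset.mem_powerset.1 hs)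
      omega
    rw [hempty]
    simp

lemma msigma_eq (k : ℕ) (A : Matrix (Fin n) (Fin n) ℝ) :
    msigma n k A = ∑ t ∈ Finset.powersetCard k Finset.univ, ∑ σ ∈ Pset n t,
      ((Equiv.Perm.sign σ : ℤ) : ℝ) * ∏ i ∈ t, A (σ i) i := by
  classical
  by_cases hk : k ≤ n
  · rw [msigma, if_pos hk, Matrix.charpoly, Matrix.det_apply,
      Polynomial.finset_sum_coeff, Finset.mul_sum]
    have hterm : ∀ σ : Equiv.Perm (Fin n),
        (-1:ℝ)^k * ((Equiv.Perm.sign σ • ∏ i, Matrix.charmatrix A (σ i) i).coeff (n-k))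
          = ∑ s ∈ ((Finset.univ.filter fun i => σ i = i).powerset.filter
              (fun s => s.card + (Finset.univ.filter fun i => ¬ σ i = i).card = k)),
            ((Equiv.Perm.sign σ : ℤ) : ℝ) *
              ∏ i ∈ s ∪ (Finset.univ.filter fun i => ¬ σ i = i), A (σ i) i := by
      intro σ
      rw [Polynomial.coeff_smul, Units.smul_def, zsmul_eq_mul, mul_left_comm,
        coeff_perm_prod hk A σ, Finset.mul_sum]
    rw [Finset.sum_congr rfl fun σ _ => hterm σ]
    rw [Finset.sum_sigma', Finset.sum_sigma']
    refine Finset.sum_nbij'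
      (fun p => ⟨p.2 ∪ (Finset.univ.filter fun i => ¬ p.1 i = i), p.1⟩)
      (fun q => ⟨q.2, q.1.filter (fun i => q.2 i = i)⟩) ?_ ?_ ?_ ?_ ?_
    · rintro ⟨σ, s⟩ hp
      rw [Finset.mem_sigma] at hp
      rw [Finset.mem_filter, Finset.mem_powerset] at hp
      obtain ⟨-, hsub, hcard⟩ := hp
      have hdisj : Disjoint s (Finset.univ.filter fun i => ¬ σ i = i) :=
        Finset.disjoint_left.2 fun a ha haN =>
          (Finset.mem_filter.1 haN).2 (Finset.mem_filter.1 (hsub ha)).2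
      refine Finset.mem_sigma.2 ⟨?_, ?_⟩
      · rw [Finset.mem_powersetCard]
        exact ⟨Finset.subset_univ _,
          by rw [Finset.card_union_of_disjoint hdisj]; exact hcard⟩
      · rw [Pset, Finset.mem_filter]
        refine ⟨Finset.mem_univ _, fun i hi => ?_⟩
        by_contra hne
        exact hi (Finset.mem_union.2 (Or.inr (Finset.mem_filter.2 ⟨Finset.mem_univ _, hne⟩)))
    · rintro ⟨t, σ⟩ hq
      rw [Finset.mem_sigma] at hq
      obtain ⟨ht, hσ⟩ := hq
      rw [Finset.mem_powersetCard] at ht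
      rw [Pset, Finset.mem_filter] at hσ
      have hfix : ∀ i ∉ t, σ i = i := hσ.2
      refine Finset.mem_sigma.2 ⟨Finset.mem_univ _, ?_⟩
      rw [Finset.mem_filter, Finset.mem_powerset]
      constructor
      · intro a ha
        rw [Finset.mem_filter] at ha ⊢
        exact ⟨Finset.mem_univ _, ha.2⟩
      · have hNt : (Finset.univ.filter fun i => ¬ σ i = i)
            = t.filter (fun i => ¬ σ i = i) := by
          ext a
          simp only [Finset.mem_filter, Finset.mem_univ, true_and]
          exact ⟨fun h => ⟨by by_contra hat; exact h (hfix a hat), h⟩, fun h => h.2⟩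
        rw [hNt]
        have := Finset.card_filter_add_card_filter_not
          (s := t) (p := fun i => σ i = i)
        simpa using this.trans ht.2
    · rintro ⟨σ, s⟩ hp
      rw [Finset.mem_sigma, Finset.mem_filter, Finset.mem_powerset] at hp
      obtain ⟨-, hsub, -⟩ := hp
      have h2 : Finset.filter (fun i => σ i = i)
          (s ∪ Finset.univ.filter fun i => ¬ σ i = i) = s := by
        ext a
        simp only [Finset.mem_filter, Finset.mem_union, Finset.mem_univ, true_and]
        constructor
        · rintro ⟨has | haN, hfix⟩
          · exact has
          · exact absurd hfix haN
        · intro has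
          exact ⟨Or.inl has, (Finset.mem_filter.1 (hsub has)).2⟩
      exact congrArg (fun u => (⟨σ, u⟩ : Σ _σ : Equiv.Perm (Fin n), Finset (Fin n))) h2
    · rintro ⟨t, σ⟩ hq
      rw [Finset.mem_sigma] at hq
      obtain ⟨ht, hσ⟩ := hq
      rw [Pset, Finset.mem_filter] at hσ
      have hfix : ∀ i ∉ t, σ i = i := hσ.2
      have h2 : (t.filter fun i => σ i = i) ∪ (Finset.univ.filter fun i => ¬ σ i = i)
          = t := by
        ext a
        simp only [Finset.mem_union, Finset.mem_filter, Finset.mem_univ, true_and]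
        constructor
        · rintro (⟨hat, -⟩ | hmoved)
          · exact hat
          · by_contra hat
            exact hmoved (hfix a hat)
        · intro hat
          by_cases hfa : σ a = a
          · exact Or.inl ⟨hat, hfa⟩
          · exact Or.inr hfa
      exact congrArg (fun u => (⟨u, σ⟩ : Σ _t : Finset (Fin n), Equiv.Perm (Fin n))) h2
    · rintro ⟨σ, s⟩ _
      rfl
  · rw [msigma, if_neg hk]
    have hempty : (Finset.powersetCard k (Finset.univ : Finset (Fin n))) = ∅ :=
      Finset.powersetCard_eq_empty.2 (by simp only [Finset.card_univ, Fintype.card_fin]; omega)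
    rw [hempty, Finset.sum_empty]

lemma newton_eq (k : ℕ) (A : Matrix (Fin n) (Fin n) ℝ) (i j : Fin n) :
    newton n k A i j = ∑ t ∈ Finset.powersetCard k Finset.univ, ∑ σ ∈ Pset n t,
      ((Equiv.Perm.sign σ : ℤ) : ℝ) *
        (if i ∈ t ∧ σ i = j then ∏ m ∈ t.erase i, A (σ m) m else 0) := by
  classical
  have hder : HasDerivAt (fun s : ℝ => msigma n k (A + s • Matrix.single j i 1))
      (∑ t ∈ Finset.powersetCard k Finset.univ, ∑ σ ∈ Pset n t,
        ((Equiv.Perm.sign σ : ℤ) : ℝ) *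
          ∑ m ∈ t, (∏ l ∈ t.erase m, A (σ l) l) •
            (Matrix.single j i (1:ℝ) (σ m) m)) 0 := by
    simp only [msigma_eq]
    apply HasDerivAt.fun_sum
    intro t _
    apply HasDerivAt.fun_sum
    intro σ _
    apply HasDerivAt.const_mul
    have hfac : ∀ m ∈ t, HasDerivAt
        (fun s : ℝ => ((A + s • Matrix.single j i 1 :
            Matrix (Fin n) (Fin n) ℝ)) (σ m) m)
        (Matrix.single j i (1:ℝ) (σ m) m) 0 := by
      intro m _
      simp only [Matrix.add_apply, Matrix.smul_apply, smul_eq_mul]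
      simpa using ((hasDerivAt_id (0:ℝ)).mul_const
        (Matrix.single j i (1:ℝ) (σ m) m)).const_add (A (σ m) m)
    have hp := HasDerivAt.fun_finsetProd hfac
    simpa using hp
  rw [show newton n k A i j
      = deriv (fun s : ℝ => msigma n k (A + s • Matrix.single j i 1)) 0 from rfl]
  rw [hder.deriv]
  refine Finset.sum_congr rfl fun t _ => Finset.sum_congr rfl fun σ _ => ?_
  congr 1
  by_cases hit : i ∈ t
  · rw [Finset.sum_eq_single_of_mem i hit (fun b _ hbi => by
      simp [Matrix.single, Ne.symm hbi])]
    simp only [Matrix.single, Matrix.of_apply, smul_eq_mul,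
      eq_self_iff_true, and_true]
    by_cases hji : σ i = j
    · rw [if_pos hji.symm, if_pos ⟨hit, hji⟩, mul_one]
    · rw [if_neg (fun h => hji h.symm), if_neg (fun h => hji h.2), mul_zero]
  · rw [if_neg (fun h => hit h.1)]
    refine Finset.sum_eq_zero fun b hb => ?_
    have hib : i ≠ b := fun h => hit (h ▸ hb)
    simp [Matrix.single, hib]

end NewtonAux

/-- for a smooth Codazzi matrix field the Newton tensor is
divergence free: `∑_i ∂_i (σ_k(A))^i_j = 0`. -/
theorem newton_divergence_free {n : ℕ} (k : ℕ) (U : Set (Fin n → ℝ)) (hU : IsOpen U)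
    (A : (Fin n → ℝ) → Matrix (Fin n) (Fin n) ℝ)
    (hsmooth : ∀ i j, ContDiffOn ℝ (⊤ : ℕ∞) (fun x => A x i j) U)
    (hcodazzi : ∀ x ∈ U, ∀ i j l : Fin n,
      fderiv ℝ (fun y => A y i j) x (Pi.single l 1) =
        fderiv ℝ (fun y => A y i l) x (Pi.single j 1)) :
    ∀ x ∈ U, ∀ j : Fin n,
      ∑ i, fderiv ℝ (fun y => newton n k (A y) i j) x (Pi.single i 1) = 0 := by
  classical
  intro x hx j
  have hder : ∀ a b : Fin n, HasFDerivAt (fun y => A y a b)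
      (fderiv ℝ (fun y => A y a b) x) x :=
    fun a b => (((hsmooth a b).contDiffAt (hU.mem_nhds hx)).differentiableAt
      (by simp)).hasFDerivAt
  have key : ∀ i : Fin n, HasFDerivAt (fun y => newton n k (A y) i j)
      (∑ t ∈ Finset.powersetCard k Finset.univ, ∑ σ ∈ NewtonAux.Pset n t,
        if i ∈ t ∧ σ i = j then
          ((Equiv.Perm.sign σ : ℤ) : ℝ) •
            ∑ m ∈ t.erase i, (∏ l ∈ (t.erase i).erase m, A x (σ l) l) •
              fderiv ℝ (fun y => A y (σ m) m) x
        else 0) x := by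
    intro i
    have hfun : (fun y => newton n k (A y) i j) = fun y =>
        ∑ t ∈ Finset.powersetCard k Finset.univ, ∑ σ ∈ NewtonAux.Pset n t,
          ((Equiv.Perm.sign σ : ℤ) : ℝ) *
            (if i ∈ t ∧ σ i = j then ∏ m ∈ t.erase i, A y (σ m) m else 0) := by
      funext y; exact NewtonAux.newton_eq k (A y) i j
    rw [hfun]
    apply HasFDerivAt.fun_sum; intro t _
    apply HasFDerivAt.fun_sum; intro σ _
    by_cases hc : i ∈ t ∧ σ i = j
    · simp only [if_pos hc]
      exact (HasFDerivAt.finsetProd (fun m _ => hder (σ m) m)).const_mul _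
    · simp only [if_neg hc, mul_zero]
      exact hasFDerivAt_const 0 x
  have happ : ∀ i : Fin n,
      fderiv ℝ (fun y => newton n k (A y) i j) x (Pi.single i 1)
        = ∑ t ∈ Finset.powersetCard k Finset.univ, ∑ σ ∈ NewtonAux.Pset n t,
            (if i ∈ t ∧ σ i = j then
              ((Equiv.Perm.sign σ : ℤ) : ℝ) *
                ∑ m ∈ t.erase i, (∏ l ∈ (t.erase i).erase m, A x (σ l) l) *
                  fderiv ℝ (fun y => A y (σ m) m) x (Pi.single i 1)
            else 0) := by
    intro i
    rw [(key i).fderiv]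
    rw [ContinuousLinearMap.sum_apply]
    refine Finset.sum_congr rfl fun t _ => ?_
    rw [ContinuousLinearMap.sum_apply]
    refine Finset.sum_congr rfl fun σ _ => ?_
    by_cases hc : i ∈ t ∧ σ i = j
    · rw [if_pos hc, if_pos hc]
      simp only [ContinuousLinearMap.smul_apply, ContinuousLinearMap.sum_apply,
        smul_eq_mul, Finset.mul_sum]
    · rw [if_neg hc, if_neg hc, ContinuousLinearMap.zero_apply]
  refine (Finset.sum_congr rfl fun i _ => happ i).trans ?_
  rw [Finset.sum_comm]
  refine Finset.sum_eq_zero fun t _ => ?_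
  have L1 : ∀ i : Fin n, (∑ σ ∈ NewtonAux.Pset n t,
      (if i ∈ t ∧ σ i = j then
        ((Equiv.Perm.sign σ : ℤ) : ℝ) *
          ∑ m ∈ t.erase i, (∏ l ∈ (t.erase i).erase m, A x (σ l) l) *
            fderiv ℝ (fun y => A y (σ m) m) x (Pi.single i 1)
      else 0))
      = ∑ σ : Equiv.Perm (Fin n), ∑ m : Fin n,
          (if (∀ a ∉ t, σ a = a) ∧ i ∈ t ∧ σ i = j ∧ m ∈ t.erase i then
            ((Equiv.Perm.sign σ : ℤ) : ℝ) *
              ((∏ l ∈ (t.erase i).erase m, A x (σ l) l) *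
                fderiv ℝ (fun y => A y (σ m) m) x (Pi.single i 1))
          else 0) := by
    intro i
    rw [NewtonAux.Pset, Finset.sum_filter]
    refine Finset.sum_congr rfl fun σ _ => ?_
    by_cases h1 : ∀ a ∉ t, σ a = a
    · rw [if_pos h1]
      by_cases h2 : i ∈ t ∧ σ i = j
      · rw [if_pos h2, Finset.mul_sum]
        have conv1 : (∑ m : Fin n, if m ∈ t.erase i then
            ((Equiv.Perm.sign σ : ℤ) : ℝ) *
              ((∏ l ∈ (t.erase i).erase m, A x (σ l) l) *
                fderiv ℝ (fun y => A y (σ m) m) x (Pi.single i 1)) else 0)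
            = ∑ m ∈ t.erase i, ((Equiv.Perm.sign σ : ℤ) : ℝ) *
              ((∏ l ∈ (t.erase i).erase m, A x (σ l) l) *
                fderiv ℝ (fun y => A y (σ m) m) x (Pi.single i 1)) := by
          rw [Finset.sum_ite_mem, Finset.univ_inter]
        rw [← conv1]
        refine Finset.sum_congr rfl fun m _ => ?_
        by_cases hm : m ∈ t.erase i
        · rw [if_pos hm, if_pos ⟨h1, h2.1, h2.2, hm⟩]
        · rw [if_neg hm, if_neg (fun h => hm h.2.2.2)]
      · rw [if_neg h2]
        exact (Finset.sum_eq_zero fun m _ =>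
          if_neg (fun h => h2 ⟨h.2.1, h.2.2.1⟩)).symm
    · rw [if_neg h1]
      exact (Finset.sum_eq_zero fun m _ => if_neg (fun h => h1 h.1)).symm
  refine (Finset.sum_congr rfl fun i _ => L1 i).trans ?_
  rw [Finset.sum_comm]
  have L2 : (∑ σ : Equiv.Perm (Fin n), ∑ i : Fin n, ∑ m : Fin n,
      (if (∀ a ∉ t, σ a = a) ∧ i ∈ t ∧ σ i = j ∧ m ∈ t.erase i then
        ((Equiv.Perm.sign σ : ℤ) : ℝ) *
          ((∏ l ∈ (t.erase i).erase m, A x (σ l) l) *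
            fderiv ℝ (fun y => A y (σ m) m) x (Pi.single i 1))
      else 0))
      = ∑ p ∈ (Finset.univ.filter
          (fun p : Equiv.Perm (Fin n) × Fin n × Fin n =>
            (∀ a ∉ t, p.1 a = a) ∧ p.2.1 ∈ t ∧ p.1 p.2.1 = j ∧
              p.2.2 ∈ t.erase p.2.1)),
          ((Equiv.Perm.sign p.1 : ℤ) : ℝ) *
            ((∏ l ∈ (t.erase p.2.1).erase p.2.2, A x (p.1 l) l) *
              fderiv ℝ (fun y => A y (p.1 p.2.2) p.2.2) x (Pi.single p.2.1 1)) := by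
    rw [Finset.sum_filter, Fintype.sum_prod_type]
    refine Finset.sum_congr rfl fun σ _ => ?_
    rw [Fintype.sum_prod_type]
  rw [L2]
  refine Finset.sum_involution
    (fun p _ => (p.1 * Equiv.swap p.2.1 p.2.2, p.2.2, p.2.1)) ?_ ?_ ?_ ?_
  · rintro ⟨σ, i, m⟩ hp
    rw [Finset.mem_filter] at hp
    obtain ⟨-, h1, h2i, h2σ, h2m⟩ := hp
    obtain ⟨hmi, hmt⟩ := Finset.mem_erase.1 h2m
    have hsign : ((Equiv.Perm.sign (σ * Equiv.swap i m) : ℤ) : ℝ)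
        = -((Equiv.Perm.sign σ : ℤ) : ℝ) := by
      rw [Equiv.Perm.sign_mul, Equiv.Perm.sign_swap (Ne.symm hmi)]
      push_cast
      ring
    have hprod : ∏ l ∈ (t.erase m).erase i, A x ((σ * Equiv.swap i m) l) l
        = ∏ l ∈ (t.erase i).erase m, A x (σ l) l := by
      rw [Finset.erase_right_comm]
      refine Finset.prod_congr rfl fun l hl => ?_
      obtain ⟨hlm, hl2⟩ := Finset.mem_erase.1 hl
      obtain ⟨hli, -⟩ := Finset.mem_erase.1 hl2
      rw [Equiv.Perm.mul_apply, Equiv.swap_apply_of_ne_of_ne hli hlm]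
    have hfd : fderiv ℝ (fun y => A y ((σ * Equiv.swap i m) i) i) x (Pi.single m 1)
        = fderiv ℝ (fun y => A y (σ m) m) x (Pi.single i 1) := by
      rw [Equiv.Perm.mul_apply, Equiv.swap_apply_left]
      exact (hcodazzi x hx (σ m) m i).symm
    show _ + _ = (0:ℝ)
    rw [hsign, hprod, hfd]
    ring
  · rintro ⟨σ, i, m⟩ hp - heq
    rw [Finset.mem_filter] at hp
    obtain ⟨-, -, -, -, h2m⟩ := hp
    exact (Finset.mem_erase.1 h2m).1 (congrArg (fun q => q.2.1) heq)
  · rintro ⟨σ, i, m⟩ hp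
    rw [Finset.mem_filter] at hp
    obtain ⟨-, h1, h2i, h2σ, h2m⟩ := hp
    obtain ⟨hmi, hmt⟩ := Finset.mem_erase.1 h2m
    rw [Finset.mem_filter]
    refine ⟨Finset.mem_univ _, ?_, hmt, ?_, ?_⟩
    · intro a ha
      have hai : a ≠ i := fun h => ha (h ▸ h2i)
      have ham : a ≠ m := fun h => ha (h ▸ hmt)
      rw [Equiv.Perm.mul_apply, Equiv.swap_apply_of_ne_of_ne hai ham, h1 a ha]
    · rw [Equiv.Perm.mul_apply, Equiv.swap_apply_right]
      exact h2σ
    · exact Finset.mem_erase.2 ⟨Ne.symm hmi, h2i⟩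
  · rintro ⟨σ, i, m⟩ hp
    have hmul : σ * Equiv.swap i m * Equiv.swap m i = σ := by
      rw [Equiv.swap_comm m i, mul_assoc, Equiv.swap_mul_self, mul_one]
    exact congrArg (fun u => (u, i, m)) hmul
end

section
/- For λ ∈ Γ_k with H_k = 1 (where H_j = σ_j(λ)/C(n,j)), one has σ₁(λ)σ_k(λ) − (k+1)σ_{k+1}(λ) ≥ (k/n) σ₁(λ) σ_k(λ) ≥ k σ_k(λ), with equality if and only if λ₁ = ⋯ = λₙ = 1. -/
open Matrix Finset Real MeasureTheory

/-!
With `H_j = σ_j / C(n, j)`, Newton's inequalities `H_{j-1} H_{j+1} ≤ H_j²` and the positivity of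
`H_1, …, H_k` on `Γ_k` make the ratios `H_{j+1} / H_j` nonincreasing for `j ≤ k`. Hence
`H_{k+1} ≤ H_1 H_k`, which is the first inequality, and `1 = H_k ≤ H_1 ^ k`, i.e. `σ_1 ≥ n`, which
is the second. In the equality case `H_1 = 1`, so the ratio chain forces `H_2 = 1`, and then
`∑ (λ_i - 1)² = σ_1² - 2 σ_2 - 2 σ_1 + n = 0`.

Newton's inequalities are proved classically: differentiating `∏ (X + λ_i)` removes a variable
without changing the `H_j` (Rolle's theorem keeps the roots real), and inverting the variables
reverses the order of the `H_j`.
-/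

namespace Multiset

section CommSemiring

variable {R : Type*} [CommSemiring R]

theorem esymm_zero (s : Multiset R) : s.esymm 0 = 1 := by
  simp [esymm]

theorem esymm_cons_succ (a : R) (s : Multiset R) (j : ℕ) :
    (a ::ₘ s).esymm (j + 1) = s.esymm (j + 1) + a * s.esymm j := by
  simp [esymm, powersetCard_cons, sum_map_mul_left]

theorem esymm_eq_zero_of_card_lt {s : Multiset R} {j : ℕ} (h : card s < j) : s.esymm j = 0 := by
  simp [esymm, powersetCard_eq_empty _ h]

theorem esymm_card (s : Multiset R) : s.esymm (card s) = s.prod := by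
  induction s using Multiset.induction with
  | empty => simp [esymm_zero]
  | cons a t ih =>
    rw [card_cons, esymm_cons_succ, ih, esymm_eq_zero_of_card_lt (Nat.lt_succ_self _), prod_cons,
      zero_add]

theorem esymm_one (s : Multiset R) : s.esymm 1 = s.sum := by
  simp [esymm, powersetCard_one]

theorem sq_sum_eq_sum_map_sq_add_two_mul_esymm_two (s : Multiset R) :
    s.sum ^ 2 = (s.map (· ^ 2)).sum + 2 * s.esymm 2 := by
  induction s using Multiset.induction with
  | empty => simp [esymm_eq_zero_of_card_lt (s := (0 : Multiset R)) two_pos]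
  | cons a t ih =>
    rw [sum_cons, map_cons, sum_cons, esymm_cons_succ, esymm_one, add_sq, ih]
    ring

end CommSemiring

section Field

variable {K : Type*} [Field K]

theorem esymm_eq_prod_mul_esymm_inv {s : Multiset K} (h0 : (0 : K) ∉ s) {i j : ℕ}
    (hij : i + j = card s) : s.esymm i = s.prod * (s.map (·⁻¹)).esymm j := by
  induction s using Multiset.induction generalizing i j with
  | empty =>
    obtain ⟨rfl, rfl⟩ : i = 0 ∧ j = 0 := by simpa using hij
    simp [esymm_zero]
  | cons a t ih =>
    have ha : a ≠ 0 := fun h => h0 (h ▸ mem_cons_self a t)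
    have ht : (0 : K) ∉ t := fun h => h0 (mem_cons_of_mem h)
    rw [card_cons] at hij
    rcases j with _ | j
    · rw [add_zero] at hij
      rw [hij, ← card_cons, esymm_card, esymm_zero, mul_one]
    rw [map_cons, esymm_cons_succ, prod_cons]
    rcases i with _ | i
    · have hj : j = card t := by omega
      have h := ih ht (by omega : 0 + j = card t)
      rw [esymm_zero] at h
      rw [esymm_eq_zero_of_card_lt (s := t.map (·⁻¹)) (by simp [hj]), esymm_zero, zero_add, h]
      field_simp
    · rw [esymm_cons_succ, ih ht (by omega : i + 1 + j = card t),
        ih ht (by omega : i + (j + 1) = card t)]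
      field_simp
      ring

end Field

section Mean

variable {K : Type*} [Field K]

/-- The paper's `H_j`. -/
noncomputable def esymmMean (s : Multiset K) (j : ℕ) : K :=
  s.esymm j / (card s).choose j

theorem esymmMean_zero (s : Multiset K) : s.esymmMean 0 = 1 := by
  simp [esymmMean, esymm_zero]

theorem esymmMean_card (s : Multiset K) : s.esymmMean (card s) = s.prod := by
  simp [esymmMean, esymm_card]

theorem esymmMean_eq_zero_of_card_lt {s : Multiset K} {j : ℕ} (h : card s < j) :
    s.esymmMean j = 0 := by
  simp [esymmMean, esymm_eq_zero_of_card_lt h]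

theorem esymm_eq_choose_mul_esymmMean [CharZero K] (s : Multiset K) (j : ℕ) :
    s.esymm j = (card s).choose j * s.esymmMean j := by
  rcases lt_or_ge (card s) j with h | h
  · simp [esymm_eq_zero_of_card_lt h, esymmMean_eq_zero_of_card_lt h]
  · have : ((card s).choose j : K) ≠ 0 := Nat.cast_ne_zero.2 (Nat.choose_pos h).ne'
    rw [esymmMean, mul_div_cancel₀ _ this]

theorem esymmMean_eq_prod_mul_esymmMean_inv {s : Multiset K} (h0 : (0 : K) ∉ s) {i j : ℕ}
    (hij : i + j = card s) : s.esymmMean i = s.prod * (s.map (·⁻¹)).esymmMean j := by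
  rw [esymmMean, esymmMean, esymm_eq_prod_mul_esymm_inv h0 hij, card_map,
    Nat.choose_symm_of_eq_add hij.symm, mul_div_assoc]

end Mean

end Multiset

namespace Polynomial

theorem coeff_eq_leadingCoeff_mul_esymm_neg_roots {R : Type*} [CommRing R] [IsDomain R]
    {p : R[X]} (hroots : Multiset.card p.roots = p.natDegree) {k : ℕ} (h : k ≤ p.natDegree) :
    p.coeff k = p.leadingCoeff * (p.roots.map Neg.neg).esymm (p.natDegree - k) := by
  rw [coeff_eq_esymm_roots_of_card hroots h, Multiset.esymm_neg, mul_assoc]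

theorem card_roots_derivative_eq_natDegree {p : ℝ[X]}
    (hroots : Multiset.card p.roots = p.natDegree) :
    Multiset.card (derivative p).roots = (derivative p).natDegree := by
  have := card_roots_le_derivative p
  have := card_roots' (derivative p)
  have := natDegree_derivative_le p
  omega

end Polynomial

namespace Multiset

open Polynomial

/-- `t` is minus the roots of the derivative of `∏ (X + a)`, all real by Rolle's theorem. -/
theorem exists_card_eq_and_esymm_eq_of_card_eq_succ {s : Multiset ℝ} {m : ℕ}
    (hs : card s = m + 1) :
    ∃ t : Multiset ℝ, card t = m ∧
      ∀ i ≤ m, ((m + 1 : ℕ) : ℝ) * t.esymm i = ((m + 1 - i : ℕ) : ℝ) * s.esymm i := by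
  set p : ℝ[X] := ((s.map Neg.neg).map fun a => X - C a).prod
  have hp_roots : p.roots = s.map Neg.neg := roots_multiset_prod_X_sub_C _
  have hp_deg : p.natDegree = m + 1 := by
    rw [natDegree_multiset_prod_X_sub_C_eq_card, card_map, hs]
  have hp_card : card p.roots = p.natDegree := by rw [hp_roots, hp_deg, card_map, hs]
  have hp_lead : p.leadingCoeff = 1 :=
    monic_multiset_prod_of_monic _ _ fun a _ => monic_X_sub_C a
  have hp_coeff : ∀ c ≤ m + 1, p.coeff c = s.esymm (m + 1 - c) := fun c hc => by
    rw [coeff_eq_leadingCoeff_mul_esymm_neg_roots hp_card (hp_deg ▸ hc), hp_lead, hp_roots,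
      map_map, hp_deg]
    simp
  set q := derivative p
  have hq_top : q.coeff m = m + 1 := by
    rw [coeff_derivative, hp_coeff _ le_rfl]
    simp [esymm_zero]
  have hq_deg : q.natDegree = m :=
    le_antisymm ((natDegree_derivative_le p).trans (by omega))
      (le_natDegree_of_ne_zero (by rw [hq_top]; positivity))
  have hq_card := card_roots_derivative_eq_natDegree hp_card
  refine ⟨q.roots.map Neg.neg, by rw [card_map, hq_card, hq_deg], fun i hi => ?_⟩
  have h := coeff_eq_leadingCoeff_mul_esymm_neg_roots hq_card (k := m - i) (by rw [hq_deg]; omega)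
  rw [leadingCoeff, hq_deg, hq_top, coeff_derivative, hp_coeff _ (by omega),
    Nat.sub_sub_self hi, show m + 1 - (m - i + 1) = i by omega] at h
  push_cast [Nat.cast_sub hi, Nat.cast_sub (Nat.le_succ_of_le hi)] at h ⊢
  linarith

theorem exists_card_eq_and_esymmMean_eq_of_card_eq_succ {s : Multiset ℝ} {m : ℕ}
    (hs : card s = m + 1) :
    ∃ t : Multiset ℝ, card t = m ∧ ∀ i ≤ m, t.esymmMean i = s.esymmMean i := by
  obtain ⟨t, ht, hst⟩ := exists_card_eq_and_esymm_eq_of_card_eq_succ hs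
  refine ⟨t, ht, fun i hi => ?_⟩
  have hchoose : ((m.choose i : ℕ) : ℝ) * (m + 1 : ℕ) = (m + 1).choose i * (m + 1 - i : ℕ) := by
    exact_mod_cast Nat.choose_mul_succ_eq m i
  have h1 : ((m.choose i : ℕ) : ℝ) ≠ 0 := Nat.cast_ne_zero.2 (Nat.choose_pos hi).ne'
  have h2 : ((m + 1).choose i : ℝ) ≠ 0 := Nat.cast_ne_zero.2 (Nat.choose_pos (by omega)).ne'
  have h3 : ((m + 1 : ℕ) : ℝ) ≠ 0 := Nat.cast_ne_zero.2 (by omega)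
  rw [esymmMean, esymmMean, ht, hs, div_eq_div_iff h1 h2]
  refine mul_left_cancel₀ h3 ?_
  linear_combination ((m + 1).choose i : ℝ) * hst i hi - s.esymm i * hchoose

theorem exists_card_eq_and_esymmMean_eq_of_le_card {s : Multiset ℝ} {d : ℕ}
    (hd : d ≤ card s) :
    ∃ t : Multiset ℝ, card t = d ∧ ∀ i ≤ d, t.esymmMean i = s.esymmMean i := by
  suffices ∀ k (s : Multiset ℝ), card s = d + k →
      ∃ t : Multiset ℝ, card t = d ∧ ∀ i ≤ d, t.esymmMean i = s.esymmMean i from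
    this _ s (Nat.add_sub_cancel' hd).symm
  intro k
  induction k with
  | zero => exact fun s hs => ⟨s, hs, fun _ _ => rfl⟩
  | succ k ih =>
    intro s hs
    obtain ⟨t₁, ht₁, hst₁⟩ := exists_card_eq_and_esymmMean_eq_of_card_eq_succ (m := d + k) hs
    obtain ⟨t, ht, htt₁⟩ := ih t₁ ht₁
    exact ⟨t, ht, fun i hi => (htt₁ i hi).trans (hst₁ i (by omega))⟩

theorem esymmMean_two_le_sq (s : Multiset ℝ) : s.esymmMean 2 ≤ s.esymmMean 1 ^ 2 := by
  rcases lt_or_ge (card s) 2 with hs | hs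
  · rw [esymmMean_eq_zero_of_card_lt hs]
    positivity
  obtain ⟨t, ht, hst⟩ := exists_card_eq_and_esymmMean_eq_of_le_card hs
  obtain ⟨x, y, rfl⟩ := card_eq_two.1 ht
  rw [← hst 1 (by norm_num), ← hst 2 le_rfl]
  simp only [esymmMean, insert_eq_cons, esymm_pair_one, esymm_pair_two, card_cons,
    card_singleton, Nat.reduceAdd, Nat.choose_self, Nat.choose_succ_self_right, Nat.cast_one,
    Nat.cast_ofNat, div_one]
  nlinarith [sq_nonneg (x - y)]

/-- Newton's inequality. After differentiating down to `j + 2` variables, inverting them turns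
`H_j, H_{j+1}, H_{j+2}` into multiples of `H_2, H_1, H_0`. -/
theorem esymmMean_mul_esymmMean_add_two_le_sq (s : Multiset ℝ) (j : ℕ) :
    s.esymmMean j * s.esymmMean (j + 2) ≤ s.esymmMean (j + 1) ^ 2 := by
  rcases lt_or_ge (card s) (j + 2) with hs | hs
  · rw [esymmMean_eq_zero_of_card_lt hs, mul_zero]
    positivity
  obtain ⟨t, ht, hst⟩ := exists_card_eq_and_esymmMean_eq_of_le_card hs
  rw [← hst j (by omega), ← hst (j + 1) (by omega), ← hst (j + 2) le_rfl]
  by_cases h0 : (0 : ℝ) ∈ t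
  · rw [← ht, esymmMean_card, prod_eq_zero h0, mul_zero]
    positivity
  have hrev : ∀ i ≤ 2, t.esymmMean (j + 2 - i) = t.prod * (t.map (·⁻¹)).esymmMean i :=
    fun i hi => esymmMean_eq_prod_mul_esymmMean_inv h0 (by omega)
  have h0' := hrev 0 (by norm_num)
  have h1' := hrev 1 (by norm_num)
  have h2' := hrev 2 le_rfl
  simp only [Nat.sub_zero, esymmMean_zero, mul_one, show j + 2 - 1 = j + 1 by omega,
    Nat.add_sub_cancel] at h0' h1' h2'
  rw [h0', h1', h2']
  nlinarith [mul_le_mul_of_nonneg_left (esymmMean_two_le_sq (t.map (·⁻¹))) (sq_nonneg t.prod)]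

end Multiset

section LogConcave

variable {H : ℕ → ℝ} {k : ℕ}

theorem apply_succ_le_apply_one_mul (h0 : H 0 = 1) (hlc : ∀ j, H j * H (j + 2) ≤ H (j + 1) ^ 2)
    (hpos : ∀ j ≤ k, 0 < H j) : ∀ j ≤ k, H (j + 1) ≤ H 1 * H j := by
  intro j hj
  induction j with
  | zero => rw [h0, mul_one]
  | succ j ih =>
    have hj0 := hpos j (by omega)
    have hj1 := hpos (j + 1) hj
    refine le_of_mul_le_mul_left ?_ hj0
    calc H j * H (j + 2) ≤ H (j + 1) * H (j + 1) := by rw [← sq]; exact hlc j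
      _ ≤ H (j + 1) * (H 1 * H j) := by gcongr; exact ih (by omega)
      _ = H j * (H 1 * H (j + 1)) := by ring

theorem apply_le_apply_one_pow (h0 : H 0 = 1) (h1 : 0 ≤ H 1)
    (hratio : ∀ j < k, H (j + 1) ≤ H 1 * H j) : H k ≤ H 1 ^ k := by
  induction k with
  | zero => rw [h0, pow_zero]
  | succ k ih =>
    calc H (k + 1) ≤ H 1 * H k := hratio k (by omega)
      _ ≤ H 1 * H 1 ^ k := by gcongr; exact ih fun j hj => hratio j (by omega)
      _ = H 1 ^ (k + 1) := by ring

theorem apply_le_apply_of_succ_le {i : ℕ} (hanti : ∀ j < k, H (j + 1) ≤ H j) (hik : i ≤ k) :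
    H k ≤ H i := by
  induction k, hik using Nat.le_induction with
  | base => exact le_rfl
  | succ k hik ih => exact (hanti k (by omega)).trans (ih fun j hj => hanti j (by omega))

end LogConcave

section Garding

variable {n k : ℕ} {lam : Fin n → ℝ}

noncomputable def esymmMean (n j : ℕ) (lam : Fin n → ℝ) : ℝ :=
  esymm n j lam / n.choose j

theorem esymmMean_eq_esymmMean_map (n j : ℕ) (lam : Fin n → ℝ) :
    esymmMean n j lam = (Finset.univ.val.map lam).esymmMean j := by
  rw [esymmMean, Multiset.esymmMean, esymm, ← Finset.esymm_map_val, Multiset.card_map,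
    Finset.card_val, Finset.card_univ, Fintype.card_fin]

theorem esymm_eq_choose_mul_esymmMean (n j : ℕ) (lam : Fin n → ℝ) :
    esymm n j lam = n.choose j * esymmMean n j lam := by
  rw [esymmMean_eq_esymmMean_map, esymm, ← Finset.esymm_map_val,
    Multiset.esymm_eq_choose_mul_esymmMean, Multiset.card_map, Finset.card_val, Finset.card_univ,
    Fintype.card_fin]

theorem esymmMean_zero (lam : Fin n → ℝ) : esymmMean n 0 lam = 1 := by
  rw [esymmMean_eq_esymmMean_map, Multiset.esymmMean_zero]

theorem esymmMean_mul_esymmMean_add_two_le_sq (lam : Fin n → ℝ) (j : ℕ) :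
    esymmMean n j lam * esymmMean n (j + 2) lam ≤ esymmMean n (j + 1) lam ^ 2 := by
  simp only [esymmMean_eq_esymmMean_map]
  exact Multiset.esymmMean_mul_esymmMean_add_two_le_sq _ j

theorem esymmMean_eq_one_iff (hk : k ≤ n) :
    esymmMean n k lam = 1 ↔ esymm n k lam = n.choose k := by
  rw [esymm_eq_choose_mul_esymmMean, mul_eq_left₀ (Nat.cast_ne_zero.2 (Nat.choose_pos hk).ne')]

theorem esymm_one_eq_sum (lam : Fin n → ℝ) : esymm n 1 lam = ∑ i, lam i := by
  simp [esymm, Finset.powersetCard_one]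

theorem esymm_const_one (n j : ℕ) : esymm n j (fun _ => 1) = n.choose j := by
  simp [esymm]

theorem cast_succ_mul_choose_succ (hk : k ≤ n) :
    ((k : ℝ) + 1) * n.choose (k + 1) = (n - k) * n.choose k := by
  have := Nat.choose_succ_right_eq n k
  rw [mul_comm, mul_comm _ (n.choose k : ℝ), ← Nat.cast_sub hk]
  exact_mod_cast this

theorem esymmMean_pos_of_mem_GammaK (hlam : lam ∈ GammaK n k) :
    ∀ j ≤ k, 0 < esymmMean n j lam := by
  rintro (_ | j) hj
  · simp [esymmMean_zero]
  · have h := hlam (j + 1) (by omega) hj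
    rw [esymm_eq_choose_mul_esymmMean] at h
    exact pos_of_mul_pos_right h (Nat.cast_nonneg _)

theorem esymmMean_succ_le_of_mem_GammaK (hlam : lam ∈ GammaK n k) :
    ∀ j ≤ k, esymmMean n (j + 1) lam ≤ esymmMean n 1 lam * esymmMean n j lam :=
  apply_succ_le_apply_one_mul (H := (esymmMean n · lam)) (esymmMean_zero lam)
    (esymmMean_mul_esymmMean_add_two_le_sq lam) (esymmMean_pos_of_mem_GammaK hlam)

theorem succ_mul_esymm_succ_le_of_mem_GammaK (hk1 : 1 ≤ k) (hk : k ≤ n)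
    (hlam : lam ∈ GammaK n k) :
    (k + 1) * esymm n (k + 1) lam ≤ (n - k) / n * (esymm n 1 lam * esymm n k lam) := by
  have hn : (n : ℝ) ≠ 0 := Nat.cast_ne_zero.2 (by omega)
  have hc : (0 : ℝ) ≤ (n - k) * n.choose k := by
    have : (k : ℝ) ≤ n := by exact_mod_cast hk
    positivity
  simp only [esymm_eq_choose_mul_esymmMean, Nat.choose_one_right]
  calc ((k : ℝ) + 1) * (n.choose (k + 1) * esymmMean n (k + 1) lam)
      = (n - k) * n.choose k * esymmMean n (k + 1) lam := by
        rw [← mul_assoc, cast_succ_mul_choose_succ hk]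
    _ ≤ (n - k) * n.choose k * (esymmMean n 1 lam * esymmMean n k lam) := by
        gcongr; exact esymmMean_succ_le_of_mem_GammaK hlam k le_rfl
    _ = (n - k) / n * (n * esymmMean n 1 lam * (n.choose k * esymmMean n k lam)) := by
        field_simp

theorem cast_le_esymm_one_of_mem_GammaK (hk1 : 1 ≤ k) (hk : k ≤ n) (hlam : lam ∈ GammaK n k)
    (hHk : esymm n k lam = n.choose k) : (n : ℝ) ≤ esymm n 1 lam := by
  have hH1 : 0 ≤ esymmMean n 1 lam := (esymmMean_pos_of_mem_GammaK hlam 1 hk1).le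
  have hpow : esymmMean n k lam ≤ esymmMean n 1 lam ^ k :=
    apply_le_apply_one_pow (H := (esymmMean n · lam)) (esymmMean_zero lam) hH1
      fun j hj => esymmMean_succ_le_of_mem_GammaK hlam j hj.le
  rw [(esymmMean_eq_one_iff hk).2 hHk, one_le_pow_iff_of_nonneg hH1 (by omega)] at hpow
  rw [esymm_eq_choose_mul_esymmMean, Nat.choose_one_right]
  nlinarith

theorem sum_sq_eq_esymm (lam : Fin n → ℝ) :
    ∑ i, lam i ^ 2 = esymm n 1 lam ^ 2 - 2 * esymm n 2 lam := by
  have h := (Finset.univ.val.map lam).sq_sum_eq_sum_map_sq_add_two_mul_esymm_two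
  rw [Multiset.map_map, Finset.esymm_map_val] at h
  rw [esymm_one_eq_sum, esymm]
  simp only [Function.comp_def, Finset.sum_map_val] at h
  linarith

theorem eq_one_of_esymm_one_of_esymm_two (h1 : esymm n 1 lam = n)
    (h2 : esymm n 2 lam = n.choose 2) : ∀ i, lam i = 1 := by
  have hsq : ∑ i, (lam i - 1) ^ 2 = 0 := by
    have hexp : ∑ i, (lam i - 1) ^ 2 = ∑ i, lam i ^ 2 - 2 * ∑ i, lam i + n := by
      simp [sub_sq, Finset.sum_add_distrib, Finset.sum_sub_distrib, Finset.mul_sum]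
    rw [hexp, sum_sq_eq_esymm, ← esymm_one_eq_sum, h1, h2, Nat.cast_choose_two]
    ring
  intro i
  have := (Finset.sum_eq_zero_iff_of_nonneg fun j _ => sq_nonneg (lam j - 1)).1 hsq i
    (Finset.mem_univ i)
  linarith [pow_eq_zero_iff (n := 2) (two_ne_zero) |>.1 this]

theorem esymm_two_eq_choose_of_mem_GammaK (hk2 : 2 ≤ k) (hk : k ≤ n) (hlam : lam ∈ GammaK n k)
    (hHk : esymm n k lam = n.choose k) (h1 : esymm n 1 lam = n) :
    esymm n 2 lam = n.choose 2 := by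
  have hH1 : esymmMean n 1 lam = 1 := (esymmMean_eq_one_iff (by omega)).2 (by simpa using h1)
  have hratio : ∀ j ≤ k, esymmMean n (j + 1) lam ≤ esymmMean n j lam := fun j hj => by
    simpa [hH1] using esymmMean_succ_le_of_mem_GammaK hlam j hj
  have hle : esymmMean n 2 lam ≤ 1 := hH1 ▸ hratio 1 (by omega)
  have hge : 1 ≤ esymmMean n 2 lam := (esymmMean_eq_one_iff hk).2 hHk ▸
    apply_le_apply_of_succ_le (H := (esymmMean n · lam)) (fun j hj => hratio j hj.le) hk2
  exact (esymmMean_eq_one_iff (by omega)).1 (le_antisymm hle hge)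

end Garding

/-- on `Γ_k` with `H_k = 1`,
`σ_1 σ_k - (k+1) σ_{k+1} ≥ (k/n) σ_1 σ_k ≥ k σ_k`, with equality iff `λ ≡ 1`. -/
theorem sigma_chain_with_Hk_one {n k : ℕ} (hk1 : 1 ≤ k) (hk : k ≤ n)
    (lam : Fin n → ℝ) (hlam : lam ∈ GammaK n k)
    (hHk : esymm n k lam = n.choose k) :
    esymm n 1 lam * esymm n k lam - (k + 1) * esymm n (k + 1) lam ≥
      ((k : ℝ) / n) * (esymm n 1 lam * esymm n k lam) ∧
    ((k : ℝ) / n) * (esymm n 1 lam * esymm n k lam) ≥ k * esymm n k lam ∧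
    (esymm n 1 lam * esymm n k lam - (k + 1) * esymm n (k + 1) lam = k * esymm n k lam
      ↔ ∀ i, lam i = 1) := by
  have hn : (0 : ℝ) < n := by exact_mod_cast hk1.trans hk
  have hkσk : 0 < k * esymm n k lam := mul_pos (by exact_mod_cast hk1) (hlam k hk1 le_rfl)
  have hupper := succ_mul_esymm_succ_le_of_mem_GammaK hk1 hk hlam
  rw [sub_div, div_self hn.ne'] at hupper
  have hσ1 := cast_le_esymm_one_of_mem_GammaK hk1 hk hlam hHk
  have hmul : ((k : ℝ) / n) * (esymm n 1 lam * esymm n k lam) =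
      k * esymm n k lam / n * esymm n 1 lam := by ring
  have hfirst : esymm n 1 lam * esymm n k lam - (k + 1) * esymm n (k + 1) lam ≥
      ((k : ℝ) / n) * (esymm n 1 lam * esymm n k lam) := by linarith
  have hsecond : ((k : ℝ) / n) * (esymm n 1 lam * esymm n k lam) ≥ k * esymm n k lam := by
    rw [hmul, ge_iff_le]
    calc (k : ℝ) * esymm n k lam = k * esymm n k lam / n * n := (div_mul_cancel₀ _ hn.ne').symm
      _ ≤ k * esymm n k lam / n * esymm n 1 lam := by gcongr
  refine ⟨hfirst, hsecond, fun heq => ?_, fun h => ?_⟩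
  · have h1 : esymm n 1 lam = n := by
      refine le_antisymm (le_of_mul_le_mul_left ?_ (div_pos hkσk hn)) hσ1
      rw [← hmul, div_mul_cancel₀ _ hn.ne', ← heq]
      exact hfirst
    obtain rfl | hk2 : k = 1 ∨ 2 ≤ k := by omega
    · -- for `k = 1` the equality itself reads `n² - 2 σ_2 = n`
      refine eq_one_of_esymm_one_of_esymm_two h1 ?_
      rw [Nat.cast_choose_two]
      rw [h1, Nat.cast_one] at heq
      linarith
    · exact eq_one_of_esymm_one_of_esymm_two h1
        (esymm_two_eq_choose_of_mem_GammaK hk2 hk hlam hHk h1)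
  · obtain rfl : lam = fun _ => 1 := funext h
    simp only [esymm_const_one, Nat.choose_one_right]
    linear_combination -cast_succ_mul_choose_succ hk
end

section
/- Let u be a smooth function on a bounded connected domain Ω ⊂ ℝⁿ with |Du| < 1, whose graph shape operator A ∈ Γ_k everywhere with σ_k(A) = C(n,k) constant, and u = c on ∂Ω. Then u < c in Ω. -/
open Matrix Finset Real MeasureTheory

/-! ### Auxiliary lemmas -/

open Filter Set in
/-- Second-derivative test: at a local maximum the second derivative is nonpositive. -/
lemma second_deriv_nonpos' {g g' : ℝ → ℝ} (hg : ∀ t, HasDerivAt g (g' t) t)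
    (hmax : IsLocalMax g 0) {d : ℝ} (hd : HasDerivAt g' d 0) : d ≤ 0 := by
  by_contra hlt
  push_neg at hlt
  have h0 : g' 0 = 0 := hmax.hasDerivAt_eq_zero (hg 0)
  have hslope := hasDerivAt_iff_tendsto_slope.1 hd
  have hpos : ∀ᶠ t in nhdsWithin (0:ℝ) (Set.Ioi 0), 0 < g' t := by
    have h1 : ∀ᶠ t in nhdsWithin (0:ℝ) {(0:ℝ)}ᶜ, 0 < slope g' 0 t :=
      hslope.eventually (eventually_gt_nhds hlt)
    have h2 : ∀ᶠ t in nhdsWithin (0:ℝ) (Set.Ioi 0), 0 < slope g' 0 t :=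
      h1.filter_mono (nhdsWithin_mono _ (fun t ht => ne_of_gt ht))
    filter_upwards [h2, self_mem_nhdsWithin] with t ht ht'
    have ht0 : (0:ℝ) < t := ht'
    have hts : slope g' 0 t = g' t / t := by simp [slope_def_field, h0]
    rw [hts] at ht
    have := mul_pos ht ht0
    rwa [div_mul_cancel₀ _ (ne_of_gt ht0)] at this
  have hle : ∀ᶠ t in nhdsWithin (0:ℝ) (Set.Ioi 0), g t ≤ g 0 :=
    hmax.filter_mono nhdsWithin_le_nhds
  obtain ⟨δ, hδ, hsub⟩ := mem_nhdsGT_iff_exists_Ioo_subset.1 (hpos.and hle)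
  have hδ0 : (0:ℝ) < δ := hδ
  set t := δ / 2 with htdef
  have htmem : t ∈ Set.Ioo (0:ℝ) δ := ⟨by positivity, by simpa [htdef] using half_lt_self hδ0⟩
  have hcont : ContinuousOn g (Set.Icc 0 t) :=
    (continuous_iff_continuousAt.2 fun s => (hg s).continuousAt).continuousOn
  obtain ⟨ξ, hξmem, hξ⟩ := exists_hasDerivAt_eq_slope g g' htmem.1 hcont (fun x _ => hg x)
  have hξδ : ξ ∈ Set.Ioo (0:ℝ) δ := ⟨hξmem.1, lt_trans hξmem.2 htmem.2⟩
  have h₁ := (hsub hξδ).1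
  have h₂ := (hsub htmem).2
  rw [hξ] at h₁
  have : 0 < g t - g 0 := by
    have := mul_pos h₁ (sub_pos.2 htmem.1)
    rwa [div_mul_cancel₀ _ (ne_of_gt (sub_pos.2 htmem.1))] at this
  linarith

lemma pd_contDiff' {n : ℕ} {u : (Fin n → ℝ) → ℝ} (hu : ContDiff ℝ (⊤ : ℕ∞) u) (i : Fin n) :
    ContDiff ℝ (⊤ : ℕ∞) (pd u i) :=
  (hu.fderiv_right (by simp)).clm_apply contDiff_const

lemma gradSq_contDiff' {n : ℕ} {u : (Fin n → ℝ) → ℝ} (hu : ContDiff ℝ (⊤ : ℕ∞) u) :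
    ContDiff ℝ (⊤ : ℕ∞) (gradSq u) :=
  ContDiff.sum fun i _ => (pd_contDiff' hu i).pow 2

/-- At a critical point the shape operator's diagonal is the pure second partials. -/
lemma aop_diag' {n : ℕ} {u : (Fin n → ℝ) → ℝ} (hu : ContDiff ℝ (⊤ : ℕ∞) u)
    {z : Fin n → ℝ} (hz : fderiv ℝ u z = 0) (i : Fin n) :
    Aop u z i i = pd (pd u i) i z := by
  have hpd0 : ∀ j, pd u j z = 0 := by intro j; simp [pd, hz]
  have hgs0 : gradSq u z = 0 := by simp [gradSq, hpd0]
  have hfd : DifferentiableAt ℝ (pd u i) z :=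
    ((pd_contDiff' hu i).differentiable (by simp)).differentiableAt
  have hsd : DifferentiableAt ℝ (fun y => Real.sqrt (1 - gradSq u y)) z := by
    apply DifferentiableAt.sqrt
    · exact (differentiableAt_const 1).sub
        (((gradSq_contDiff' hu).differentiable (by simp)).differentiableAt)
    · rw [hgs0]; norm_num
  have hval : Real.sqrt (1 - gradSq u z) = 1 := by rw [hgs0]; simp
  have hinv : DifferentiableAt ℝ (fun y => (Real.sqrt (1 - gradSq u y))⁻¹) z :=
    hsd.inv (by rw [hval]; norm_num)
  have hmul : HasFDerivAt (fun y => pd u i y * (Real.sqrt (1 - gradSq u y))⁻¹)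
      (pd u i z • fderiv ℝ (fun y => (Real.sqrt (1 - gradSq u y))⁻¹) z +
       (Real.sqrt (1 - gradSq u z))⁻¹ • fderiv ℝ (pd u i) z) z :=
    (hfd.hasFDerivAt).mul (hinv.hasFDerivAt)
  have h2 : HasFDerivAt (fun y => pd u i y / Real.sqrt (1 - gradSq u y))
      (fderiv ℝ (pd u i) z) z := by
    have heq : (fun y => pd u i y / Real.sqrt (1 - gradSq u y)) =
        (fun y => pd u i y * (Real.sqrt (1 - gradSq u y))⁻¹) := by
      funext y; rw [div_eq_mul_inv]
    rw [heq]
    convert hmul using 1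
    rw [hpd0 i, hval]
    simp
  show pd (fun y => pd u i y / Real.sqrt (1 - gradSq u y)) i z = _
  rw [pd, h2.fderiv]; rfl

lemma msigma_one_eq_trace' {n : ℕ} (hn : 1 ≤ n) (A : Matrix (Fin n) (Fin n) ℝ) :
    msigma n 1 A = Matrix.trace A := by
  have : Nonempty (Fin n) := Fin.pos_iff_nonempty.1 hn
  rw [msigma, if_pos hn, Matrix.trace_eq_neg_charpoly_coeff A, Fintype.card_fin]
  ring

open Filter Set in
/-- At an interior maximum, all pure second partials are nonpositive. -/
lemma pd2_nonpos' {n : ℕ} {u : (Fin n → ℝ) → ℝ} (hu : ContDiff ℝ (⊤ : ℕ∞) u)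
    {Ω : Set (Fin n → ℝ)} (hΩ : IsOpen Ω) {z : Fin n → ℝ} (hz : z ∈ Ω)
    (hmax : IsMaxOn u (closure Ω) z) (i : Fin n) :
    pd (pd u i) i z ≤ 0 := by
  set v : Fin n → ℝ := Pi.single i 1 with hv
  set L : ℝ → (Fin n → ℝ) := fun t => z + t • v with hLdef
  have hL0 : L 0 = z := by simp [hLdef]
  have hL : ∀ t, HasDerivAt L v t := by
    intro t
    have : HasDerivAt (fun s : ℝ => s • v) ((1:ℝ) • v) t := (hasDerivAt_id t).smul_const v
    exact (by simpa using this : HasDerivAt (fun s : ℝ => s • v) v t).const_add z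
  have hLcont : Continuous L :=
    continuous_iff_continuousAt.2 fun t => (hL t).continuousAt
  set g : ℝ → ℝ := fun t => u (L t) with hgdef
  set g' : ℝ → ℝ := fun t => pd u i (L t) with hg'def
  have hg : ∀ t, HasDerivAt g (g' t) t := fun t =>
    ((hu.differentiable (by simp)) (L t)).hasFDerivAt.comp_hasDerivAt t (hL t)
  have hg'd : HasDerivAt g' (pd (pd u i) i z) 0 := by
    have h1 : HasDerivAt (fun t => pd u i (L t)) (fderiv ℝ (pd u i) (L 0) v) 0 := by
      have hpdd : DifferentiableAt ℝ (pd u i) (L 0) :=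
        ((pd_contDiff' hu i).differentiable (by simp)).differentiableAt
      exact hpdd.hasFDerivAt.comp_hasDerivAt 0 (hL 0)
    rw [hL0] at h1
    exact h1
  have hgmax : IsLocalMax g 0 := by
    have hnhds : L ⁻¹' Ω ∈ nhds (0:ℝ) := by
      apply hLcont.continuousAt.preimage_mem_nhds
      rw [hL0]; exact hΩ.mem_nhds hz
    filter_upwards [hnhds] with t ht
    have : u (L t) ≤ u z := hmax (subset_closure ht)
    simpa [hgdef, hL0] using this
  exact second_deriv_nonpos' hg hgmax hg'd

/-- with `A ∈ Γ_k` and `σ_k(A) = C(n,k)` constant and `u = c` on `∂Ω`,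
one has `u < c` in `Ω`. -/
theorem u_lt_c_in_Omega {n k : ℕ} (hk1 : 1 ≤ k) (hk : k ≤ n)
    (Ω : Set (Fin n → ℝ)) (hΩ : IsOpen Ω) (hconn : IsConnected Ω)
    (hbd : Bornology.IsBounded Ω)
    (u : (Fin n → ℝ) → ℝ) (hu : ContDiff ℝ (⊤ : ℕ∞) u)
    (hgrad : ∀ x ∈ closure Ω, Real.sqrt (gradSq u x) < 1)
    (hGamma : ∀ x ∈ closure Ω, ∀ i, 1 ≤ i → i ≤ k → 0 < msigma n i (Aop u x))
    (hconst : ∀ x ∈ closure Ω, msigma n k (Aop u x) = n.choose k)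
    (c : ℝ) (hbu : ∀ x ∈ frontier Ω, u x = c) :
    ∀ x ∈ Ω, u x < c := by
  intro x hx
  have hn : 1 ≤ n := le_trans hk1 hk
  have hKne : (closure Ω).Nonempty := ⟨x, subset_closure hx⟩
  have hKcomp : IsCompact (closure Ω) := hbd.isCompact_closure
  obtain ⟨x0, hx0K, hx0max⟩ := hKcomp.exists_isMaxOn hKne hu.continuous.continuousOn
  have key : ∀ z ∈ Ω, ¬ IsMaxOn u (closure Ω) z := by
    intro z hz hmax
    have hzc : z ∈ closure Ω := subset_closure hz
    have hloc : IsLocalMax u z :=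
      hmax.isLocalMax (Filter.mem_of_superset (hΩ.mem_nhds hz) subset_closure)
    have hdz : fderiv ℝ u z = 0 := hloc.fderiv_eq_zero
    have htr : Matrix.trace (Aop u z) ≤ 0 := by
      have htr' : Matrix.trace (Aop u z) = ∑ i, Aop u z i i := rfl
      rw [htr']
      apply Finset.sum_nonpos
      intro i _
      rw [aop_diag' hu hdz i]
      exact pd2_nonpos' hu hΩ hz hmax i
    have hpos := hGamma z hzc 1 le_rfl hk1
    rw [msigma_one_eq_trace' hn] at hpos
    linarith
  have hx0f : x0 ∈ frontier Ω := by
    have hnot : x0 ∉ Ω := fun h => key x0 h hx0max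
    rw [frontier, hΩ.interior_eq]
    exact ⟨hx0K, hnot⟩
  have hc : u x0 = c := hbu x0 hx0f
  have hle : u x ≤ c := hc ▸ hx0max (subset_closure hx)
  rcases lt_or_eq_of_le hle with h | h
  · exact h
  · exfalso
    apply key x hx
    intro y hy
    calc u y ≤ u x0 := hx0max hy
    _ = c := hc
    _ = u x := h.symm
end

section
/- Let u be a smooth function on a connected open set Ω ⊂ ℝⁿ with |Du| < 1. If the shape operator of its spacelike graph satisfies hⱼᵢ = δ_{ij} everywhere, i.e., ∂/∂x_i (u_j/√(1 − |Du|²)) = δ_{ij} for all i,j, then there exist a ∈ ℝⁿ and b ∈ ℝ such that u(x) = b + √(1 + |x − a|²); i.e., the graph is part of a hyperboloid. -/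
open Matrix Finset Real MeasureTheory

lemma clm_ext_single {n : ℕ} {L M : (Fin n → ℝ) →L[ℝ] ℝ}
    (h : ∀ i, L (Pi.single i 1) = M (Pi.single i 1)) : L = M := by
  apply ContinuousLinearMap.coe_injective
  exact Module.Basis.ext (Pi.basisFun ℝ (Fin n)) (fun i => by simpa using h i)

lemma const_on_of_hasFDerivAt_zero {n : ℕ} {Ω : Set (Fin n → ℝ)} (hΩ : IsOpen Ω)
    (hconn : IsConnected Ω) {f : (Fin n → ℝ) → ℝ}
    (hf : ∀ x ∈ Ω, HasFDerivAt f (0 : (Fin n → ℝ) →L[ℝ] ℝ) x)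
    {x y : Fin n → ℝ} (hx : x ∈ Ω) (hy : y ∈ Ω) : f x = f y := by
  haveI : PreconnectedSpace Ω := Subtype.preconnectedSpace hconn.isPreconnected
  have hloc : IsLocallyConstant (fun z : Ω => f z) := by
    rw [IsLocallyConstant.iff_exists_open]
    rintro ⟨z, hz⟩
    obtain ⟨ε, hε, hball⟩ := Metric.isOpen_iff.1 hΩ z hz
    have hUopen : IsOpen ((Subtype.val : Ω → (Fin n → ℝ)) ⁻¹' Metric.ball z ε) :=
      IsOpen.preimage continuous_subtype_val Metric.isOpen_ball
    refine ⟨Subtype.val ⁻¹' Metric.ball z ε, hUopen,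
      by exact Metric.mem_ball_self hε, ?_⟩
    rintro ⟨w, hw⟩ hmem
    have hdiff : DifferentiableOn ℝ f (Metric.ball z ε) := fun p hp =>
      ((hf p (hball hp)).differentiableAt).differentiableWithinAt
    have hmem' : w ∈ Metric.ball z ε := hmem
    exact (convex_ball z ε).is_const_of_fderivWithin_eq_zero hdiff
      (fun p hp => by
        rw [fderivWithin_eq_fderiv (Metric.isOpen_ball.uniqueDiffOn p hp)
          (hf p (hball hp)).differentiableAt]
        exact (hf p (hball hp)).fderiv) hmem' (Metric.mem_ball_self hε)
  exact hloc.apply_eq_of_preconnectedSpace ⟨x, hx⟩ ⟨y, hy⟩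

noncomputable def wfun {n : ℕ} (u : (Fin n → ℝ) → ℝ) (j : Fin n) : (Fin n → ℝ) → ℝ :=
  fun y => pd u j y / Real.sqrt (1 - gradSq u y)

/-- derivative of `y ↦ √(1 + |y - a|²)` -/
lemma sqrt_one_add_deriv {n : ℕ} (a x : Fin n → ℝ) :
    HasFDerivAt (fun y : Fin n → ℝ => Real.sqrt (1 + ∑ i, (y i - a i) ^ 2))
      ((1 / (2 * Real.sqrt (1 + ∑ i, (x i - a i) ^ 2))) •
        (∑ i, (2 * (x i - a i)) • (ContinuousLinearMap.proj i : (Fin n → ℝ) →L[ℝ] ℝ))) x := by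
  have hterm : ∀ i : Fin n, HasFDerivAt (fun y : Fin n → ℝ => (y i - a i) ^ 2)
      ((2 * (x i - a i)) • (ContinuousLinearMap.proj i : (Fin n → ℝ) →L[ℝ] ℝ)) x := by
    intro i
    have hi : HasFDerivAt (fun y : Fin n → ℝ => y i - a i)
        (ContinuousLinearMap.proj i : (Fin n → ℝ) →L[ℝ] ℝ) x :=
      (ContinuousLinearMap.proj i : (Fin n → ℝ) →L[ℝ] ℝ).hasFDerivAt.sub_const (a i)
    have h := hi.mul hi
    have e : (2 * (x i - a i)) • (ContinuousLinearMap.proj i : (Fin n → ℝ) →L[ℝ] ℝ)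
        = (x i - a i) • (ContinuousLinearMap.proj i : (Fin n → ℝ) →L[ℝ] ℝ)
          + (x i - a i) • (ContinuousLinearMap.proj i : (Fin n → ℝ) →L[ℝ] ℝ) := by
      rw [two_mul, add_smul]
    rw [e]
    simpa [sq, Pi.mul_def] using h
  have hsum : HasFDerivAt (fun y : Fin n → ℝ => 1 + ∑ i, (y i - a i) ^ 2)
      (∑ i, (2 * (x i - a i)) • (ContinuousLinearMap.proj i : (Fin n → ℝ) →L[ℝ] ℝ)) x := by
    have := HasFDerivAt.sum (fun i (_ : i ∈ Finset.univ) => hterm i)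
    simpa using this.const_add 1
  have hne : (1 + ∑ i, (x i - a i) ^ 2) ≠ 0 := by positivity
  exact hsum.sqrt hne


/-- if the shape operator of a spacelike graph is the identity,
then the graph is a part of a hyperboloid: `u = b + √(1 + |x - a|²)`. -/
theorem identity_shape_operator_hyperboloid {n : ℕ}
    (Ω : Set (Fin n → ℝ)) (hΩ : IsOpen Ω) (hconn : IsConnected Ω)
    (u : (Fin n → ℝ) → ℝ) (hu : ContDiffOn ℝ (⊤ : ℕ∞) u Ω)
    (hgrad : ∀ x ∈ Ω, Real.sqrt (gradSq u x) < 1)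
    (hshape : ∀ x ∈ Ω, ∀ i j : Fin n, Aop u x i j = if i = j then (1 : ℝ) else 0) :
    ∃ (a : Fin n → ℝ) (b : ℝ),
      ∀ x ∈ Ω, u x = b + Real.sqrt (1 + ∑ i, (x i - a i) ^ 2) := by
  classical
  obtain ⟨x₀, hx₀⟩ := hconn.nonempty
  -- Step 1: each wfun u j has derivative proj j on Ω
  have hwderiv : ∀ x ∈ Ω, ∀ j, HasFDerivAt (wfun u j)
      (ContinuousLinearMap.proj j : (Fin n → ℝ) →L[ℝ] ℝ) x := by
    intro x hx j
    have hdiff : DifferentiableAt ℝ (wfun u j) x := by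
      by_contra hnd
      have h0 : fderiv ℝ (wfun u j) x = 0 := fderiv_zero_of_not_differentiableAt hnd
      have h1 := hshape x hx j j
      simp only [Aop, Matrix.of_apply, if_pos rfl] at h1
      have h2 : pd (fun y => pd u j y / Real.sqrt (1 - gradSq u y)) j x = 0 := by
        show fderiv ℝ (wfun u j) x (Pi.single j 1) = 0
        rw [h0]; rfl
      rw [h2] at h1; norm_num at h1
    have heq : fderiv ℝ (wfun u j) x = ContinuousLinearMap.proj j := by
      apply clm_ext_single
      intro i
      have h1 := hshape x hx i j
      simp only [Aop, Matrix.of_apply] at h1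
      have h2 : fderiv ℝ (wfun u j) x (Pi.single i 1)
          = if i = j then (1:ℝ) else 0 := h1
      rw [h2, ContinuousLinearMap.proj_apply]
      by_cases hij : i = j <;> simp [hij, Pi.single_apply]
    rw [← heq]; exact hdiff.hasFDerivAt
  -- Step 2: wfun u j x = x j - a j on Ω
  set a : Fin n → ℝ := fun j => x₀ j - wfun u j x₀ with ha
  have hwx : ∀ x ∈ Ω, ∀ j, wfun u j x = x j - a j := by
    intro x hx j
    have hzero : ∀ z ∈ Ω, HasFDerivAt (fun y => wfun u j y - y j)
        (0 : (Fin n → ℝ) →L[ℝ] ℝ) z := by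
      intro z hz
      have h1 := (hwderiv z hz j).sub
        ((ContinuousLinearMap.proj j : (Fin n → ℝ) →L[ℝ] ℝ).hasFDerivAt)
      simpa [Pi.sub_def] using h1
    have hconst := const_on_of_hasFDerivAt_zero hΩ hconn hzero hx hx₀
    simp only [ha]
    linarith [hconst]
  -- Step 3: pointwise algebra, pd u j x = (x j - a j)/√(1+Q)
  have hpd : ∀ x ∈ Ω, ∀ j, pd u j x
      = (x j - a j) / Real.sqrt (1 + ∑ i, (x i - a i) ^ 2) := by
    intro x hx j
    have hs0 : 0 ≤ gradSq u x := Finset.sum_nonneg (fun i _ => sq_nonneg _)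
    have hs1 : gradSq u x < 1 := by
      have h := hgrad x hx
      nlinarith [Real.sq_sqrt hs0, Real.sqrt_nonneg (gradSq u x)]
    have hrpos : 0 < Real.sqrt (1 - gradSq u x) := Real.sqrt_pos.2 (by linarith)
    have hr2 : (Real.sqrt (1 - gradSq u x)) ^ 2 = 1 - gradSq u x :=
      Real.sq_sqrt (by linarith)
    set r := Real.sqrt (1 - gradSq u x) with hrdef
    have hpdj : ∀ j, pd u j x = (x j - a j) * r := by
      intro j
      have h := hwx x hx j
      rw [wfun] at h
      field_simp at h
      rw [div_eq_iff (Real.sqrt_pos.2 (by linarith : (0:ℝ) < 1 - gradSq u x)).ne'] at h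
      exact h
    set Q := ∑ i, (x i - a i) ^ 2 with hQdef
    have hQ0 : 0 ≤ Q := Finset.sum_nonneg (fun i _ => sq_nonneg _)
    have hQpos : (0:ℝ) < 1 + Q := by linarith
    have hgs : gradSq u x = Q * (1 - gradSq u x) := by
      have : gradSq u x = ∑ i, (pd u i x) ^ 2 := rfl
      rw [this]
      calc ∑ i, (pd u i x) ^ 2 = ∑ i, (x i - a i) ^ 2 * r ^ 2 := by
            refine Finset.sum_congr rfl (fun i _ => ?_)
            rw [hpdj i, mul_pow]
        _ = Q * (1 - gradSq u x) := by rw [← Finset.sum_mul, hr2]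
    have hprod : (1 - gradSq u x) * (1 + Q) = 1 := by nlinarith
    have hrq : r * Real.sqrt (1 + Q) = 1 := by
      have hsq : (r * Real.sqrt (1 + Q)) ^ 2 = 1 := by
        rw [mul_pow, hr2, Real.sq_sqrt hQpos.le]; exact hprod
      have hpos : 0 ≤ r * Real.sqrt (1 + Q) :=
        mul_nonneg hrpos.le (Real.sqrt_nonneg _)
      calc r * Real.sqrt (1 + Q) = Real.sqrt ((r * Real.sqrt (1 + Q)) ^ 2) :=
            (Real.sqrt_sq hpos).symm
        _ = 1 := by rw [hsq, Real.sqrt_one]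
    have hsq : Real.sqrt (1 + Q) ≠ 0 := by positivity
    rw [hpdj j, eq_div_iff hsq, mul_assoc, hrq, mul_one]
  -- Step 4: u - g constant
  set g : (Fin n → ℝ) → ℝ := fun y => Real.sqrt (1 + ∑ i, (y i - a i) ^ 2) with hg
  have hzero : ∀ x ∈ Ω, HasFDerivAt (fun y => u y - g y)
      (0 : (Fin n → ℝ) →L[ℝ] ℝ) x := by
    intro x hx
    have hgd := sqrt_one_add_deriv a x
    have hud : HasFDerivAt u (fderiv ℝ u x) x :=
      ((hu.contDiffAt (hΩ.mem_nhds hx)).differentiableAt (by simp)).hasFDerivAt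
    have heq : fderiv ℝ u x = (1 / (2 * Real.sqrt (1 + ∑ i, (x i - a i) ^ 2))) •
        (∑ i, (2 * (x i - a i)) • (ContinuousLinearMap.proj i : (Fin n → ℝ) →L[ℝ] ℝ)) := by
      apply clm_ext_single
      intro j
      have h1 : fderiv ℝ u x (Pi.single j 1) = pd u j x := rfl
      rw [h1, hpd x hx j]
      rw [ContinuousLinearMap.smul_apply, ContinuousLinearMap.sum_apply]
      have h2 : ∀ i : Fin n, ((2 * (x i - a i)) •
          (ContinuousLinearMap.proj i : (Fin n → ℝ) →L[ℝ] ℝ)) (Pi.single j 1)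
          = if i = j then 2 * (x i - a i) else 0 := by
        intro i
        rw [ContinuousLinearMap.smul_apply, ContinuousLinearMap.proj_apply]
        by_cases hij : i = j <;> simp [hij, Pi.single_apply]
      rw [Finset.sum_congr rfl (fun i _ => h2 i), Finset.sum_ite_eq' Finset.univ j _]
      simp only [Finset.mem_univ, if_pos]
      have hQpos : (0:ℝ) < 1 + ∑ i, (x i - a i) ^ 2 := by positivity
      have hsp : Real.sqrt (1 + ∑ i, (x i - a i) ^ 2) ≠ 0 := by positivity
      field_simp
      rw [smul_eq_mul]; field_simp
    have := hud.sub hgd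
    rw [heq] at this
    simpa [Pi.sub_def] using this
  refine ⟨a, u x₀ - g x₀, fun x hx => ?_⟩
  have hc := const_on_of_hasFDerivAt_zero hΩ hconn hzero hx hx₀
  have : u x - g x = u x₀ - g x₀ := hc
  simp only [hg] at this ⊢
  linarith
end
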